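/- arXiv:2303.11370 — 2 statements merged into one kernel-verified Lean document; each statement's English description precedes it below -/
import Mathlib

section
/- Define h : ℝ → ℝ by h(t) = 3(sin t − t cos t)/t³ for t ≠ 0. Then ∫₀^∞ h(t)² t dt = 9/4. -/
/-!
Write `j₀ = sinc` and `j₁ t = (sin t - t cos t) / t²` (the spherical Bessel functions), so that
`h t = 3 j₁ t / t`. From `j₀' = -j₁` and `j₁' = j₀ - 2 j₁ / t` one gets `(j₀² + j₁²)' = -4 j₁² / t`,
so `F = 9/4 (1 - j₀² - j₁²)` is a primitive of `h(t)² t`. As `t → 0⁺`, `(j₀, j₁) → (1, 0)`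
(L'Hôpital for `j₁`), and as `t → ∞`, both tend to `0`. Since the integrand is nonnegative, this
limit behaviour alone makes it integrable, with integral `9/4 - 0`.
-/

open MeasureTheory Real

open Filter Set Topology

noncomputable def sphericalBesselJ1 (t : ℝ) : ℝ := (sin t - t * cos t) / t ^ 2

local notation "j₁" => sphericalBesselJ1

lemma hasDerivAt_sin_sub_mul_cos (x : ℝ) :
    HasDerivAt (fun t => sin t - t * cos t) (x * sin x) x :=
  ((hasDerivAt_sin x).sub ((hasDerivAt_id x).mul (hasDerivAt_cos x))).congr_deriv (by simp)

lemma hasDerivAt_sinc {x : ℝ} (hx : x ≠ 0) : HasDerivAt sinc (-j₁ x) x := by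
  have hquot : HasDerivAt (fun t => sin t / t) (-j₁ x) x := by
    refine ((hasDerivAt_sin x).div (hasDerivAt_id x) hx).congr_deriv ?_
    simp only [sphericalBesselJ1, id]
    ring
  refine hquot.congr_of_eventuallyEq ?_
  filter_upwards [eventually_ne_nhds hx] with t ht
  exact sinc_of_ne_zero ht

lemma hasDerivAt_sphericalBesselJ1 {x : ℝ} (hx : x ≠ 0) :
    HasDerivAt j₁ (sinc x - 2 * j₁ x / x) x := by
  refine ((hasDerivAt_sin_sub_mul_cos x).div (hasDerivAt_pow 2 x)
    (pow_ne_zero 2 hx)).congr_deriv ?_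
  rw [sinc_of_ne_zero hx, sphericalBesselJ1]
  field_simp
  ring

lemma tendsto_sphericalBesselJ1_nhdsGT_zero : Tendsto j₁ (𝓝[>] 0) (𝓝 0) := by
  refine HasDerivAt.lhopital_zero_nhdsGT (f' := fun t => t * sin t) (g' := fun t => 2 * t)
    (.of_forall hasDerivAt_sin_sub_mul_cos) (.of_forall fun t => by simpa using hasDerivAt_pow 2 t)
    ?_ ?_ ?_ ?_
  · filter_upwards [self_mem_nhdsWithin] with t (ht : 0 < t)
    positivity
  · have : Continuous fun t => sin t - t * cos t := by fun_prop
    simpa using (this.tendsto 0).mono_left nhdsWithin_le_nhds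
  · simpa using ((continuous_pow 2).tendsto (0 : ℝ)).mono_left nhdsWithin_le_nhds
  · have hsin : Tendsto (fun t => sin t / 2) (𝓝[>] 0) (𝓝 0) := by
      simpa using ((continuous_sin.tendsto 0).mono_left nhdsWithin_le_nhds).div_const 2
    refine hsin.congr' ?_
    filter_upwards [self_mem_nhdsWithin] with t (ht : 0 < t)
    field_simp

lemma tendsto_div_atTop_zero_of_abs_le {f : ℝ → ℝ} {C : ℝ} (hf : ∀ t, |f t| ≤ C) :
    Tendsto (fun t => f t / t) atTop (𝓝 0) := by
  refine squeeze_zero_norm' ?_ (tendsto_id.const_div_atTop C)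
  filter_upwards [eventually_gt_atTop 0] with t ht
  rw [norm_div, norm_of_nonneg ht.le]
  gcongr
  · exact (abs_nonneg _).trans (hf 0)
  · exact hf t
  · exact le_rfl

lemma tendsto_sinc_atTop : Tendsto sinc atTop (𝓝 0) := by
  refine (tendsto_div_atTop_zero_of_abs_le abs_sin_le_one).congr' ?_
  filter_upwards [eventually_ne_atTop 0] with t ht
  rw [sinc_of_ne_zero ht]

lemma tendsto_sphericalBesselJ1_atTop : Tendsto j₁ atTop (𝓝 0) := by
  have hbound (t : ℝ) : |sinc t - cos t| ≤ 2 :=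
    (abs_sub _ _).trans (by linarith [abs_sinc_le_one t, abs_cos_le_one t])
  refine (tendsto_div_atTop_zero_of_abs_le hbound).congr' ?_
  filter_upwards [eventually_ne_atTop 0] with t ht
  rw [sinc_of_ne_zero ht, sphericalBesselJ1]
  field_simp

noncomputable def sphericalBesselPrimitive (t : ℝ) : ℝ := 9 / 4 * (1 - sinc t ^ 2 - j₁ t ^ 2)

lemma hasDerivAt_sphericalBesselPrimitive {x : ℝ} (hx : x ≠ 0) :
    HasDerivAt sphericalBesselPrimitive (9 * j₁ x ^ 2 / x) x := by
  refine ((((hasDerivAt_sinc hx).pow 2).const_sub 1 |>.sub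
    ((hasDerivAt_sphericalBesselJ1 hx).pow 2)).const_mul (9 / 4)).congr_deriv ?_
  field_simp
  ring

-- `j₁ 0 = 0 / 0 = 0` and `sinc 0 = 1`, so this value is also the right limit at `0`.
lemma sphericalBesselPrimitive_zero : sphericalBesselPrimitive 0 = 0 := by
  simp [sphericalBesselPrimitive, sphericalBesselJ1]

lemma continuousWithinAt_sphericalBesselPrimitive_zero :
    ContinuousWithinAt sphericalBesselPrimitive (Ici 0) 0 := by
  rw [← continuousWithinAt_Ioi_iff_Ici, ContinuousWithinAt]
  have := ((((continuous_sinc.tendsto 0).mono_left nhdsWithin_le_nhds).pow 2).const_sub 1 |>.sub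
    (tendsto_sphericalBesselJ1_nhdsGT_zero.pow 2)).const_mul (9 / 4)
  rw [sphericalBesselPrimitive_zero]
  norm_num at this
  exact this

lemma tendsto_sphericalBesselPrimitive_atTop :
    Tendsto sphericalBesselPrimitive atTop (𝓝 (9 / 4)) := by
  have := ((tendsto_sinc_atTop.pow 2).const_sub 1 |>.sub
    (tendsto_sphericalBesselJ1_atTop.pow 2)).const_mul (9 / 4)
  norm_num at this
  exact this

/-- With `h t = 3(sin t − t cos t)/t³`, one has `∫₀^∞ h(t)² t dt = 9/4`. -/
theorem integral_h_sq_mul_self (h : ℝ → ℝ)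
    (hh : ∀ t : ℝ, t ≠ 0 → h t = 3 * (Real.sin t - t * Real.cos t) / t ^ 3) :
    ∫ t in Set.Ioi (0 : ℝ), (h t) ^ 2 * t = 9 / 4 := by
  have hintegrand : ∀ t ∈ Ioi (0 : ℝ), h t ^ 2 * t = 9 * j₁ t ^ 2 / t := by
    intro t (ht : 0 < t)
    rw [hh t ht.ne', sphericalBesselJ1]
    field_simp
    ring
  rw [setIntegral_congr_fun measurableSet_Ioi hintegrand,
    integral_Ioi_of_hasDerivAt_of_nonneg continuousWithinAt_sphericalBesselPrimitive_zero
      (fun x hx => hasDerivAt_sphericalBesselPrimitive (ne_of_gt hx))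
      (fun x (hx : 0 < x) => by positivity) tendsto_sphericalBesselPrimitive_atTop,
    sphericalBesselPrimitive_zero, sub_zero]
end

section
/- Define h : ℝ → ℝ by h(t) = 3(sin t − t cos t)/t³ for t ≠ 0. Then for every a > 0, ∫₀^∞ h(t) h(at) t² dt = 3π / (2 max(a,1)³). -/
/-!
Write `u t = sin t - t cos t`, so that the integrand is `9 u(t) u(at) / (a³ t⁴)`. Since
`6 / t⁴ = ∫₀^∞ s³ e^{-st} ds`, Fubini turns `∫₀^∞ u(t) u(at) / t⁴ dt` into `∫₀^∞ s³ L(s) ds / 6`,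
where `L` is the Laplace transform of `u(t) u(at)`. By the product-to-sum formulas `u(t) u(at)` is
a combination of `tᵏ cos(bt)` and `tᵏ sin(bt)` with `b = 1 ± a`, so `L` is an explicit rational
function of `s`. In `s³ L(s)` the polynomial parts coming from `b = 1 - a` and `b = 1 + a` cancel,
and what is left integrates, through `arctan`, to `π min(1, a³)`.
-/

open MeasureTheory Real Set Filter Topology
open scoped Nat

section ExpDecay

variable {s C : ℝ} {g : ℝ → ℝ}

lemma tendsto_pow_mul_exp_neg_mul_atTop_nhds_zero (k : ℕ) (hs : 0 < s) :
    Tendsto (fun t : ℝ => t ^ k * exp (-(s * t))) atTop (𝓝 0) := by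
  simpa [Real.rpow_natCast] using tendsto_rpow_mul_exp_neg_mul_atTop_nhds_zero k s hs

lemma integrableOn_pow_mul_exp_neg_mul (k : ℕ) (hs : 0 < s) :
    IntegrableOn (fun t : ℝ => t ^ k * exp (-(s * t))) (Ioi 0) := by
  simpa [Real.rpow_natCast] using
    integrableOn_rpow_mul_exp_neg_mul_rpow (s := k) (p := 1)
      (neg_one_lt_zero.trans_le k.cast_nonneg) one_pos hs

lemma abs_exp_neg_mul_mul_le (hg : ∀ t, |g t| ≤ C * (1 + t ^ 2)) (t : ℝ) :
    |exp (-(s * t)) * g t| ≤ C * (t ^ 0 * exp (-(s * t))) + C * (t ^ 2 * exp (-(s * t))) := by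
  rw [abs_mul, abs_of_pos (exp_pos _)]
  nlinarith [hg t, exp_pos (-(s * t))]

lemma tendsto_exp_neg_mul_mul_atTop_of_abs_le (hs : 0 < s)
    (hg : ∀ t, |g t| ≤ C * (1 + t ^ 2)) :
    Tendsto (fun t => exp (-(s * t)) * g t) atTop (𝓝 0) := by
  have hdom := ((tendsto_pow_mul_exp_neg_mul_atTop_nhds_zero 0 hs).const_mul C).add
    ((tendsto_pow_mul_exp_neg_mul_atTop_nhds_zero 2 hs).const_mul C)
  rw [mul_zero, add_zero] at hdom
  exact squeeze_zero_norm (abs_exp_neg_mul_mul_le hg) hdom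

lemma integrableOn_exp_neg_mul_mul_of_abs_le (hs : 0 < s) (hgc : Continuous g)
    (hg : ∀ t, |g t| ≤ C * (1 + t ^ 2)) :
    IntegrableOn (fun t => exp (-(s * t)) * g t) (Ioi 0) :=
  Integrable.mono' (((integrableOn_pow_mul_exp_neg_mul 0 hs).const_mul C).add
      ((integrableOn_pow_mul_exp_neg_mul 2 hs).const_mul C))
    (by fun_prop : Continuous fun t => exp (-(s * t)) * g t).aestronglyMeasurable
    (Eventually.of_forall (abs_exp_neg_mul_mul_le hg))

end ExpDecay

lemma abs_quadratic_le (p₀ p₁ p₂ t : ℝ) :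
    |p₀ + p₁ * t + p₂ * t ^ 2| ≤ (|p₀| + |p₁| + |p₂|) * (1 + t ^ 2) := by
  have ht : |t| ≤ 1 + t ^ 2 := by nlinarith [sq_abs t, sq_nonneg (|t| - 1)]
  calc |p₀ + p₁ * t + p₂ * t ^ 2| ≤ |p₀| + |p₁| * |t| + |p₂| * t ^ 2 := by
        have := abs_add_three p₀ (p₁ * t) (p₂ * t ^ 2)
        rwa [abs_mul, abs_mul, abs_of_nonneg (sq_nonneg t)] at this
    _ ≤ _ := by nlinarith [abs_nonneg p₀, abs_nonneg p₁, abs_nonneg p₂, sq_nonneg t]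

lemma abs_mul_cos_add_mul_sin_le (x y θ : ℝ) : |x * cos θ + y * sin θ| ≤ |x| + |y| := by
  calc |x * cos θ + y * sin θ| ≤ |x| * |cos θ| + |y| * |sin θ| := by
        simpa [abs_mul] using abs_add_le (x * cos θ) (y * sin θ)
    _ ≤ |x| * 1 + |y| * 1 := by gcongr <;> simp [abs_cos_le_one, abs_sin_le_one]
    _ = |x| + |y| := by ring

lemma hasDerivAt_exp_neg_mul_mul_cos_add_sin {A B : ℝ → ℝ} {A' B' t : ℝ}
    (hA : HasDerivAt A A' t) (hB : HasDerivAt B B' t) (s b : ℝ) :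
    HasDerivAt (fun t => exp (-(s * t)) * (A t * cos (b * t) + B t * sin (b * t)))
      (exp (-(s * t)) * ((A' - s * A t + b * B t) * cos (b * t)
        + (B' - s * B t - b * A t) * sin (b * t))) t := by
  have hlin (c : ℝ) : HasDerivAt (fun t => c * t) c t := by
    simpa using (hasDerivAt_id t).const_mul c
  exact ((hlin s).fun_neg.exp.fun_mul ((hA.fun_mul (hlin b).cos).fun_add
    (hB.fun_mul (hlin b).sin))).congr_deriv (by ring)

noncomputable def cosSinPoly (b c t : ℝ) : ℝ := (1 + c * t ^ 2) * cos (b * t) + b * t * sin (b * t)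

noncomputable def laplaceCosSinPoly (b c s : ℝ) : ℝ :=
  s / (s ^ 2 + b ^ 2) + 2 * b ^ 2 * s / (s ^ 2 + b ^ 2) ^ 2
    + 2 * c * s * (s ^ 2 - 3 * b ^ 2) / (s ^ 2 + b ^ 2) ^ 3

lemma abs_cosSinPoly_le (b c t : ℝ) : |cosSinPoly b c t| ≤ (1 + |b| + |c|) * (1 + t ^ 2) := by
  have hbt : |b * t| ≤ |b| * (1 + t ^ 2) := by
    simpa using abs_quadratic_le 0 b 0 t
  have := (abs_mul_cos_add_mul_sin_le (1 + c * t ^ 2) (b * t) (b * t)).trans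
    (add_le_add (by simpa using abs_quadratic_le 1 0 c t) hbt)
  unfold cosSinPoly
  linarith

lemma integrableOn_exp_neg_mul_mul_cosSinPoly {s : ℝ} (hs : 0 < s) (b c : ℝ) :
    IntegrableOn (fun t => exp (-(s * t)) * cosSinPoly b c t) (Ioi 0) :=
  integrableOn_exp_neg_mul_mul_of_abs_le hs (by unfold cosSinPoly; fun_prop)
    (abs_cosSinPoly_le b c)

lemma integral_exp_neg_mul_mul_cosSinPoly {s : ℝ} (hs : 0 < s) (b c : ℝ) :
    ∫ t in Ioi 0, exp (-(s * t)) * cosSinPoly b c t = laplaceCosSinPoly b c s := by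
  set w := s ^ 2 + b ^ 2
  have hw : 0 < w := by positivity
  -- solve `A' - s A + b B = 1 + c t²`, `B' - s B - b A = b t` degree by degree, cf.
  -- `hasDerivAt_exp_neg_mul_mul_cos_add_sin`
  set α₀ := -laplaceCosSinPoly b c s
  set α₁ := (2 * c * (b ^ 2 - s ^ 2) - b ^ 2 * w) / w ^ 2
  set α₂ := -(s * c) / w
  set β₀ := b / w + b * (b ^ 2 - s ^ 2) / w ^ 2 + 2 * b * c * (3 * s ^ 2 - b ^ 2) / w ^ 3
  set β₁ := b * s * (4 * c - w) / w ^ 2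
  set β₂ := b * c / w
  have hderiv : ∀ t ∈ Ici (0 : ℝ), HasDerivAt
      (fun t => exp (-(s * t)) * ((α₀ + α₁ * t + α₂ * t ^ 2) * cos (b * t)
        + (β₀ + β₁ * t + β₂ * t ^ 2) * sin (b * t)))
      (exp (-(s * t)) * cosSinPoly b c t) t := by
    intro t _
    have hquad (p₀ p₁ p₂ : ℝ) :
        HasDerivAt (fun t => p₀ + p₁ * t + p₂ * t ^ 2) (p₁ + p₂ * (2 * t)) t := by
      simpa using (((hasDerivAt_id t).const_mul p₁).const_add p₀).fun_add
        ((hasDerivAt_pow 2 t).const_mul p₂)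
    convert hasDerivAt_exp_neg_mul_mul_cos_add_sin (hquad α₀ α₁ α₂) (hquad β₀ β₁ β₂) s b using 2
    simp only [cosSinPoly, α₀, α₁, α₂, β₀, β₁, β₂, laplaceCosSinPoly, w]
    field_simp
    ring
  have hbound (t : ℝ) : |(α₀ + α₁ * t + α₂ * t ^ 2) * cos (b * t)
      + (β₀ + β₁ * t + β₂ * t ^ 2) * sin (b * t)|
      ≤ ((|α₀| + |α₁| + |α₂|) + (|β₀| + |β₁| + |β₂|)) * (1 + t ^ 2) := by
    have := (abs_mul_cos_add_mul_sin_le _ _ (b * t)).trans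
      (add_le_add (abs_quadratic_le α₀ α₁ α₂ t) (abs_quadratic_le β₀ β₁ β₂ t))
    linarith
  rw [integral_Ioi_of_hasDerivAt_of_tendsto' hderiv
    (integrableOn_exp_neg_mul_mul_cosSinPoly hs b c)
    (tendsto_exp_neg_mul_mul_atTop_of_abs_le hs hbound)]
  simp [α₀]

lemma integral_pow_mul_exp_neg_mul_Ioi (n : ℕ) {t : ℝ} (ht : 0 < t) :
    ∫ s in Ioi 0, s ^ n * exp (-(s * t)) = n ! / t ^ (n + 1) := by
  have hΓ := integral_rpow_mul_exp_neg_mul_Ioi (a := n + 1) (by positivity) ht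
  rw [add_sub_cancel_right, Gamma_nat_eq_factorial, ← Nat.cast_succ, rpow_natCast] at hΓ
  simp_rw [rpow_natCast, mul_comm t] at hΓ
  rw [hΓ, one_div, inv_pow, inv_mul_eq_div]

lemma integral_div_pow_succ_eq_integral_laplace (n : ℕ) {f : ℝ → ℝ}
    (hint : IntegrableOn (fun t => f t / t ^ (n + 1)) (Ioi 0)) :
    ∫ t in Ioi 0, f t / t ^ (n + 1) =
      (∫ s in Ioi 0, s ^ n * ∫ t in Ioi 0, exp (-(s * t)) * f t) / n ! := by
  set μ := volume.restrict (Ioi (0 : ℝ))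
  set K : ℝ → ℝ → ℝ := fun t s => f t * (s ^ n * exp (-(s * t)))
  have hf : AEStronglyMeasurable f μ := by
    refine (hint.1.mul (continuous_pow (n + 1)).aestronglyMeasurable).congr ?_
    filter_upwards [ae_restrict_mem measurableSet_Ioi] with t ht
    simp only [Pi.mul_apply]
    field_simp [(pow_pos (mem_Ioi.mp ht) (n + 1)).ne']
  have hK_int (t : ℝ) (ht : 0 < t) : ∫ s in Ioi 0, K t s = n ! * (f t / t ^ (n + 1)) := by
    rw [integral_const_mul, integral_pow_mul_exp_neg_mul_Ioi n ht]
    ring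
  have hK : Integrable (Function.uncurry K) (μ.prod μ) := by
    have hmeas : AEStronglyMeasurable (Function.uncurry K) (μ.prod μ) :=
      (hf.comp_fst (ν := μ)).fun_mul (Continuous.aestronglyMeasurable
        (f := fun p : ℝ × ℝ => p.2 ^ n * exp (-(p.2 * p.1))) (by fun_prop))
    refine (integrable_prod_iff hmeas).2 ⟨?_, ?_⟩
    · filter_upwards [ae_restrict_mem measurableSet_Ioi] with t ht
      exact ((integrableOn_pow_mul_exp_neg_mul n ht).const_mul (f t)).congr
        (Eventually.of_forall fun s => by simp only [K, Function.uncurry_apply_pair, mul_comm s t])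
    · refine (hint.norm.const_mul (n ! : ℝ)).congr ?_
      filter_upwards [ae_restrict_mem measurableSet_Ioi] with t ht
      have ht : 0 < t := ht
      calc (n ! : ℝ) * ‖f t / t ^ (n + 1)‖
          = ‖f t‖ * ∫ s in Ioi 0, s ^ n * exp (-(s * t)) := by
            rw [integral_pow_mul_exp_neg_mul_Ioi n ht, norm_div, norm_pow, norm_of_nonneg ht.le]
            ring
        _ = _ := by
            rw [← integral_const_mul]
            refine setIntegral_congr_fun measurableSet_Ioi fun s hs => ?_
            simp [K, norm_mul, abs_of_pos (mem_Ioi.mp hs)]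
  calc ∫ t in Ioi 0, f t / t ^ (n + 1)
      = (∫ t in Ioi 0, ∫ s in Ioi 0, K t s) / n ! := by
        rw [← integral_div]
        refine setIntegral_congr_fun measurableSet_Ioi fun t ht => ?_
        rw [hK_int t ht]
        field_simp
    _ = (∫ s in Ioi 0, ∫ t in Ioi 0, K t s) / n ! := by rw [integral_integral_swap hK]
    _ = _ := by
        congr 1
        refine setIntegral_congr_fun measurableSet_Ioi fun s _ => ?_
        rw [← integral_const_mul]
        congr 1 with t
        ring

noncomputable def laplaceRemainder (b c s : ℝ) : ℝ :=
  -(3 * b ^ 4 + 12 * c * b ^ 2) / (s ^ 2 + b ^ 2)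
    + (2 * b ^ 6 + 18 * c * b ^ 4) / (s ^ 2 + b ^ 2) ^ 2 - 8 * c * b ^ 6 / (s ^ 2 + b ^ 2) ^ 3

lemma pow_three_mul_laplaceCosSinPoly {b s : ℝ} (hw : s ^ 2 + b ^ 2 ≠ 0) (c : ℝ) :
    s ^ 3 * laplaceCosSinPoly b c s = s ^ 2 + b ^ 2 + 2 * c + laplaceRemainder b c s := by
  simp only [laplaceCosSinPoly, laplaceRemainder]
  field_simp
  ring

lemma laplaceRemainder_abs (b c s : ℝ) : laplaceRemainder |b| c s = laplaceRemainder b c s := by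
  simp only [laplaceRemainder, Even.pow_abs ⟨2, rfl⟩, Even.pow_abs ⟨1, rfl⟩,
    Even.pow_abs ⟨3, rfl⟩]

lemma integrable_inv_sq_add_sq_pow {b : ℝ} (hb : b ≠ 0) (k : ℕ) :
    Integrable fun s : ℝ => ((s ^ 2 + b ^ 2) ^ (k + 1))⁻¹ := by
  have h0 : Integrable fun s : ℝ => (s ^ 2 + b ^ 2)⁻¹ := by
    refine ((integrable_inv_one_add_sq.comp_div hb).const_mul (b ^ 2)⁻¹).congr
      (Eventually.of_forall fun s => ?_)
    field_simp
    ring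
  refine (h0.const_mul ((b ^ 2) ^ k)⁻¹).mono'
    (Continuous.aestronglyMeasurable (by fun_prop (disch := intro; positivity))) ?_
  refine Eventually.of_forall fun s => ?_
  rw [norm_inv, norm_pow, norm_of_nonneg (by positivity), ← mul_inv, pow_succ]
  gcongr
  exact le_add_of_nonneg_left (sq_nonneg s)

lemma integrable_laplaceRemainder (b c : ℝ) : Integrable (laplaceRemainder b c) := by
  rcases eq_or_ne b 0 with rfl | hb
  · have hzero : laplaceRemainder 0 c = 0 := by
      funext s
      simp [laplaceRemainder]
    rw [hzero]
    exact integrable_zero ℝ ℝ volume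
  have h1 := integrable_inv_sq_add_sq_pow hb 0
  have h2 := integrable_inv_sq_add_sq_pow hb 1
  have h3 := integrable_inv_sq_add_sq_pow hb 2
  refine (((h1.const_mul (-(3 * b ^ 4 + 12 * c * b ^ 2))).add
    (h2.const_mul (2 * b ^ 6 + 18 * c * b ^ 4))).sub (h3.const_mul (8 * c * b ^ 6))).congr
    (Eventually.of_forall fun s => ?_)
  simp only [laplaceRemainder, Pi.add_apply, Pi.sub_apply, div_eq_mul_inv]
  ring

lemma tendsto_div_sq_add_sq_pow_atTop {b : ℝ} (k : ℕ) :
    Tendsto (fun s : ℝ => s / (s ^ 2 + b ^ 2) ^ (k + 1)) atTop (𝓝 0) := by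
  refine squeeze_zero' ?_ ?_ tendsto_inv_atTop_zero
  · filter_upwards [eventually_ge_atTop 0] with s hs
    positivity
  filter_upwards [eventually_ge_atTop 1] with s hs
  have hs2 : s ^ 2 ≤ (s ^ 2 + b ^ 2) ^ (k + 1) :=
    (le_add_of_nonneg_right (sq_nonneg b)).trans (le_self_pow₀ (by nlinarith) k.succ_ne_zero)
  calc s / (s ^ 2 + b ^ 2) ^ (k + 1) ≤ s / s ^ 2 := by gcongr
    _ = s⁻¹ := by field_simp

lemma integral_laplaceRemainder_of_pos {b : ℝ} (hb : 0 < b) (c : ℝ) :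
    ∫ s in Ioi 0, laplaceRemainder b c s = -π * b * (b ^ 2 + 3 * c) := by
  set F : ℝ → ℝ := fun s => -2 * b * (b ^ 2 + 3 * c) * arctan (s / b)
    + (b ^ 4 + 6 * c * b ^ 2) * (s / (s ^ 2 + b ^ 2))
    - 2 * c * b ^ 4 * (s / (s ^ 2 + b ^ 2) ^ 2) with hF
  have hderiv (s : ℝ) (_ : s ∈ Ici (0 : ℝ)) : HasDerivAt F (laplaceRemainder b c s) s := by
    have hw : s ^ 2 + b ^ 2 ≠ 0 := by positivity
    have hq : HasDerivAt (fun s : ℝ => s ^ 2 + b ^ 2) (2 * s) s := by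
      simpa using (hasDerivAt_pow 2 s).add_const (b ^ 2)
    have harctan : HasDerivAt (fun s => arctan (s / b)) (1 / (1 + (s / b) ^ 2) * (1 / b)) s :=
      ((hasDerivAt_id s).div_const b).arctan
    have h1 : HasDerivAt (fun s => s / (s ^ 2 + b ^ 2))
        ((1 * (s ^ 2 + b ^ 2) - s * (2 * s)) / (s ^ 2 + b ^ 2) ^ 2) s :=
      (hasDerivAt_id s).div hq hw
    have hq2 : HasDerivAt (fun s : ℝ => (s ^ 2 + b ^ 2) ^ 2) (2 * (s ^ 2 + b ^ 2) * (2 * s)) s := by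
      simpa using hq.fun_pow 2
    have h2 : HasDerivAt (fun s => s / (s ^ 2 + b ^ 2) ^ 2)
        ((1 * (s ^ 2 + b ^ 2) ^ 2 - s * (2 * (s ^ 2 + b ^ 2) * (2 * s)))
          / ((s ^ 2 + b ^ 2) ^ 2) ^ 2) s :=
      (hasDerivAt_id s).div hq2 (pow_ne_zero 2 hw)
    refine (((harctan.const_mul _).add (h1.const_mul _)).sub (h2.const_mul _)).congr_deriv ?_
    simp only [laplaceRemainder]
    field_simp
    ring
  have hlim : Tendsto F atTop (𝓝 (-2 * b * (b ^ 2 + 3 * c) * (π / 2)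
      + (b ^ 4 + 6 * c * b ^ 2) * 0 - 2 * c * b ^ 4 * 0)) := by
    have harctan : Tendsto (fun s => arctan (s / b)) atTop (𝓝 (π / 2)) :=
      (tendsto_arctan_atTop.mono_right nhdsWithin_le_nhds).comp (tendsto_id.atTop_div_const hb)
    have h1 : Tendsto (fun s => s / (s ^ 2 + b ^ 2)) atTop (𝓝 0) := by
      simpa using tendsto_div_sq_add_sq_pow_atTop (b := b) 0
    have h2 : Tendsto (fun s => s / (s ^ 2 + b ^ 2) ^ 2) atTop (𝓝 0) :=
      tendsto_div_sq_add_sq_pow_atTop 1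
    rw [hF]
    exact ((harctan.const_mul _).add (h1.const_mul _)).sub (h2.const_mul _)
  rw [integral_Ioi_of_hasDerivAt_of_tendsto' hderiv
    (integrable_laplaceRemainder b c).integrableOn hlim]
  simp [F]
  ring

lemma integral_laplaceRemainder (b c : ℝ) :
    ∫ s in Ioi 0, laplaceRemainder b c s = -π * |b| * (b ^ 2 + 3 * c) := by
  rcases eq_or_ne b 0 with rfl | hb
  · simp [laplaceRemainder]
  · simp_rw [← laplaceRemainder_abs b, integral_laplaceRemainder_of_pos (abs_pos.2 hb), sq_abs]

lemma sin_sub_mul_cos_mul_sin_sub_mul_cos (a t : ℝ) :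
    (sin t - t * cos t) * (sin (a * t) - a * t * cos (a * t))
      = (cosSinPoly (1 - a) a t - cosSinPoly (1 + a) (-a) t) / 2 := by
  simp only [cosSinPoly, sub_mul, add_mul, one_mul, cos_sub, cos_add, sin_sub, sin_add]
  ring

lemma integral_exp_neg_mul_mul_sin_sub_mul_cos {s : ℝ} (hs : 0 < s) (a : ℝ) :
    ∫ t in Ioi 0, exp (-(s * t)) * ((sin t - t * cos t) * (sin (a * t) - a * t * cos (a * t)))
      = (laplaceCosSinPoly (1 - a) a s - laplaceCosSinPoly (1 + a) (-a) s) / 2 := by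
  simp_rw [sin_sub_mul_cos_mul_sin_sub_mul_cos, mul_div_assoc', mul_sub]
  rw [integral_div, integral_sub (integrableOn_exp_neg_mul_mul_cosSinPoly hs _ _)
    (integrableOn_exp_neg_mul_mul_cosSinPoly hs _ _), integral_exp_neg_mul_mul_cosSinPoly hs,
    integral_exp_neg_mul_mul_cosSinPoly hs]

lemma abs_sin_sub_mul_cos_le_sq (x : ℝ) : |sin x - x * cos x| ≤ x ^ 2 := by
  have hderiv (y : ℝ) : HasDerivAt (fun y => sin y - y * cos y) (y * sin y) y :=
    ((hasDerivAt_sin y).sub ((hasDerivAt_id y).mul (hasDerivAt_cos y))).congr_deriv (by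
      simp only [id]
      ring)
  have hbound (y : ℝ) (hy : y ∈ Metric.closedBall (0 : ℝ) |x|) : ‖y * sin y‖ ≤ |x| := by
    rw [norm_mul, ← mul_one |x|]
    exact mul_le_mul (by simpa using hy) (by simpa using abs_sin_le_one y) (norm_nonneg _)
      (abs_nonneg x)
  have := (convex_closedBall (0 : ℝ) |x|).norm_image_sub_le_of_norm_hasDerivWithin_le
    (fun y _ => (hderiv y).hasDerivWithinAt) hbound
    (Metric.mem_closedBall_self (abs_nonneg x)) (by simp : x ∈ Metric.closedBall (0 : ℝ) |x|)
  simpa [sq_abs, ← sq] using this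

lemma abs_sin_sub_mul_cos_le (x : ℝ) : |sin x - x * cos x| ≤ 1 + |x| := by
  calc |sin x - x * cos x| ≤ |sin x| + |x| * |cos x| := by
        simpa [abs_mul] using abs_sub (sin x) (x * cos x)
    _ ≤ 1 + |x| * 1 := by gcongr <;> simp [abs_sin_le_one, abs_cos_le_one]
    _ = 1 + |x| := by ring

lemma integrableOn_sin_sub_mul_cos_mul_div_pow_four {a : ℝ} (ha : 0 < a) :
    IntegrableOn (fun t => (sin t - t * cos t) * (sin (a * t) - a * t * cos (a * t)) / t ^ 4)
      (Ioi 0) := by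
  refine (integrable_inv_one_add_sq.const_mul (2 * a ^ 2 + 4 * (1 + a))).integrableOn.mono'
    (Measurable.aestronglyMeasurable (by fun_prop)) ?_
  filter_upwards [ae_restrict_mem measurableSet_Ioi] with t ht
  have ht : 0 < t := ht
  set U := |sin t - t * cos t|
  set V := |sin (a * t) - a * t * cos (a * t)|
  rw [norm_div, norm_mul, norm_pow, norm_of_nonneg ht.le, ← div_eq_mul_inv,
    div_le_div_iff₀ (by positivity) (by positivity)]
  show U * V * (1 + t ^ 2) ≤ (2 * a ^ 2 + 4 * (1 + a)) * t ^ 4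
  have hU := abs_sin_sub_mul_cos_le_sq t
  have hV := abs_sin_sub_mul_cos_le_sq (a * t)
  have hU' := abs_sin_sub_mul_cos_le t
  have hV' := abs_sin_sub_mul_cos_le (a * t)
  rw [abs_of_pos ht] at hU'
  rw [abs_of_pos (mul_pos ha ht)] at hV'
  rcases le_total t 1 with h | h
  · calc U * V * (1 + t ^ 2) ≤ (t ^ 2 * (a * t) ^ 2) * 2 :=
          mul_le_mul (mul_le_mul hU hV (abs_nonneg _) (by positivity)) (by nlinarith)
            (by positivity) (by positivity)
      _ ≤ (2 * a ^ 2 + 4 * (1 + a)) * t ^ 4 := by nlinarith [pow_pos ht 4]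
  · calc U * V * (1 + t ^ 2) ≤ ((2 * t) * ((1 + a) * t)) * (2 * t ^ 2) :=
          mul_le_mul (mul_le_mul (by linarith) (by nlinarith) (abs_nonneg _) (by positivity))
            (by nlinarith) (by positivity) (by positivity)
      _ ≤ (2 * a ^ 2 + 4 * (1 + a)) * t ^ 4 := by nlinarith [pow_pos ht 4, sq_nonneg a]

theorem integral_sin_sub_mul_cos_mul_div_pow_four {a : ℝ} (ha : 0 < a) :
    ∫ t in Ioi 0, (sin t - t * cos t) * (sin (a * t) - a * t * cos (a * t)) / t ^ 4
      = π / 6 * min 1 (a ^ 3) := by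
  -- `b ^ 2 + 2 * c = 1 + a ^ 2` for both `(b, c) = (1 - a, a)` and `(1 + a, -a)`
  have hremainder : EqOn
      (fun s => s ^ 3 * ∫ t in Ioi 0,
        exp (-(s * t)) * ((sin t - t * cos t) * (sin (a * t) - a * t * cos (a * t))))
      (fun s => (laplaceRemainder (1 - a) a s - laplaceRemainder (1 + a) (-a) s) / 2) (Ioi 0) := by
    intro s hs
    have hs : 0 < s := hs
    simp only
    have hw (b : ℝ) : s ^ 2 + b ^ 2 ≠ 0 := by positivity
    rw [integral_exp_neg_mul_mul_sin_sub_mul_cos hs, mul_div_assoc', mul_sub,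
      pow_three_mul_laplaceCosSinPoly (hw _), pow_three_mul_laplaceCosSinPoly (hw _)]
    ring
  rw [integral_div_pow_succ_eq_integral_laplace 3
      (integrableOn_sin_sub_mul_cos_mul_div_pow_four ha),
    setIntegral_congr_fun measurableSet_Ioi hremainder, integral_div,
    integral_sub (integrable_laplaceRemainder _ _).integrableOn
      (integrable_laplaceRemainder _ _).integrableOn,
    integral_laplaceRemainder, integral_laplaceRemainder, abs_of_pos (by linarith : 0 < 1 + a)]
  rcases le_total a 1 with h | h
  · rw [abs_of_nonneg (by linarith), min_eq_right (pow_le_one₀ ha.le h)]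
    norm_num [Nat.factorial]
    ring
  · rw [abs_of_nonpos (by linarith), min_eq_left (one_le_pow₀ h)]
    norm_num [Nat.factorial]
    ring

/-- With `h t = 3(sin t − t cos t)/t³`, for every `a > 0`,
`∫₀^∞ h(t) h(at) t² dt = 3π / (2 max(a,1)³)`. -/
theorem integral_h_mul_h_scaled (h : ℝ → ℝ)
    (hh : ∀ t : ℝ, t ≠ 0 → h t = 3 * (Real.sin t - t * Real.cos t) / t ^ 3)
    (a : ℝ) (ha : 0 < a) :
    ∫ t in Set.Ioi (0 : ℝ), h t * h (a * t) * t ^ 2 = 3 * π / (2 * (max a 1) ^ 3) := by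
  calc ∫ t in Ioi 0, h t * h (a * t) * t ^ 2
      = ∫ t in Ioi 0, 9 / a ^ 3 *
          ((sin t - t * cos t) * (sin (a * t) - a * t * cos (a * t)) / t ^ 4) := by
        refine setIntegral_congr_fun measurableSet_Ioi fun t ht => ?_
        have ht : 0 < t := ht
        rw [hh t ht.ne', hh (a * t) (by positivity)]
        field_simp
        ring
    _ = 9 / a ^ 3 * (π / 6 * min 1 (a ^ 3)) := by
        rw [integral_const_mul, integral_sin_sub_mul_cos_mul_div_pow_four ha]
    _ = 3 * π / (2 * (max a 1) ^ 3) := by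
        rcases le_total a 1 with hle | hle
        · rw [min_eq_right (pow_le_one₀ ha.le hle), max_eq_right hle]
          field_simp
          ring
        · rw [min_eq_left (one_le_pow₀ hle), max_eq_left hle]
          field_simp
          ring
end
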